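/- Let β > 0, let n ≥ 1, let J be a nonempty finite index set, let w_i ∈ [0,1] for i = 1, …, n, and for each j ∈ J let y^{(j)}_i ∈ [0,1] for i = 1, …, n. If ∑_{j∈J} ∑_{i=1}^n σ_β(w_i − y^{(j)}_i) ≥ |J| · n/2, then |J| · (β/4) · ∑_{i=1}^n w_i ≥ ∑_{j∈J} (∑_{i=1}^n y^{(j)}_i) · (1 − exp(−β)) / (2·(1 + exp(−β))). -/

import Mathlib

noncomputable def sigma (β t : ℝ) : ℝ := 1 / (1 + Real.exp (-(β * t)))

/-! The logistic function σ = σ_β has derivative βσ(1 − σ) ≤ β/4, satisfies σ(−t) = 1 − σ(t), and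
is concave on [0, ∞) because σ ≥ 1/2 there. Hence, for a ≥ 0 and b ∈ [0, 1],

  σ(a − b) ≤ σ(−b) + βa/4 = 1 − σ(b) + βa/4 ≤ 1/2 + βa/4 − b(σ(1) − 1/2),

the last step comparing σ with its chord over [0, 1]. Summing over i and j against the hypothesis
gives the claim, since σ(1) − 1/2 = (1 − e^{−β}) / (2(1 + e^{−β})). -/

open Finset

namespace Sigmoid

variable {β : ℝ}

lemma hasDerivAt_sigma (β t : ℝ) :
    HasDerivAt (sigma β) (β * sigma β t * (1 - sigma β t)) t := by
  have hpos : 0 < 1 + Real.exp (-(β * t)) := by positivity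
  have hlin : HasDerivAt (fun x => -(β * x)) (-β) t := by
    simpa using ((hasDerivAt_id t).const_mul β).fun_neg
  have hsigma : sigma β = fun x => (1 + Real.exp (-(β * x)))⁻¹ := funext fun _ => one_div _
  refine hsigma ▸ ((hlin.exp.const_add 1).inv hpos.ne').congr_deriv ?_
  field_simp
  ring

lemma differentiable_sigma (β : ℝ) : Differentiable ℝ (sigma β) :=
  fun t => (hasDerivAt_sigma β t).differentiableAt

lemma sigma_zero (β : ℝ) : sigma β 0 = 1 / 2 := by
  norm_num [sigma]

lemma sigma_neg (β t : ℝ) : sigma β (-t) = 1 - sigma β t := by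
  simp only [sigma, mul_neg, neg_neg, Real.exp_neg]
  field_simp
  ring

lemma sigma_one_sub_half (β : ℝ) :
    sigma β 1 - 1 / 2 = (1 - Real.exp (-β)) / (2 * (1 + Real.exp (-β))) := by
  simp only [sigma, mul_one]
  field_simp
  ring

lemma monotone_sigma (hβ : 0 ≤ β) : Monotone (sigma β) := by
  intro s t hst
  unfold sigma
  gcongr

lemma sigma_add_sub_sigma_le (hβ : 0 ≤ β) (t : ℝ) {a : ℝ} (ha : 0 ≤ a) :
    sigma β (t + a) - sigma β t ≤ β / 4 * a := by
  have hderiv : ∀ x, deriv (sigma β) x ≤ β / 4 := fun x => by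
    rw [(hasDerivAt_sigma β x).deriv, mul_assoc]
    nlinarith [sq_nonneg (sigma β x - 1 / 2)]
  simpa using image_sub_le_mul_sub_of_deriv_le (differentiable_sigma β) hderiv
    (le_add_of_nonneg_right ha)

lemma concaveOn_sigma (hβ : 0 ≤ β) : ConcaveOn ℝ (Set.Ici 0) (sigma β) := by
  refine AntitoneOn.concaveOn_of_deriv (convex_Ici 0)
    (differentiable_sigma β).continuous.continuousOn (differentiable_sigma β).differentiableOn ?_
  rw [interior_Ici]
  intro x hx y _ hxy
  have hσx : 1 / 2 ≤ sigma β x := sigma_zero β ▸ monotone_sigma hβ hx.le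
  have hσxy : sigma β x ≤ sigma β y := monotone_sigma hβ hxy
  simp only [(hasDerivAt_sigma β _).deriv, mul_assoc]
  exact mul_le_mul_of_nonneg_left (by nlinarith) hβ

lemma half_add_mul_le_sigma (hβ : 0 ≤ β) {b : ℝ} (hb : b ∈ Set.Icc (0 : ℝ) 1) :
    1 / 2 + b * (sigma β 1 - 1 / 2) ≤ sigma β b := by
  have h := (concaveOn_sigma hβ).2 (Set.mem_Ici.2 le_rfl) (Set.mem_Ici.2 zero_le_one)
    (sub_nonneg.2 hb.2) hb.1 (sub_add_cancel 1 b)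
  simp only [smul_eq_mul, mul_zero, mul_one, zero_add, sigma_zero] at h
  linarith

lemma sigma_sub_le (hβ : 0 ≤ β) {a b : ℝ} (ha : 0 ≤ a) (hb : b ∈ Set.Icc (0 : ℝ) 1) :
    sigma β (a - b) ≤ 1 / 2 + β / 4 * a - b * (sigma β 1 - 1 / 2) := by
  have hlip := sigma_add_sub_sigma_le hβ (-b) ha
  rw [neg_add_eq_sub, sigma_neg] at hlip
  linarith [half_add_mul_le_sigma hβ hb]

lemma sum_sigma_sub_le {κ : Type*} [Fintype κ] (hβ : 0 ≤ β) {a b : κ → ℝ}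
    (ha : ∀ i, 0 ≤ a i) (hb : ∀ i, b i ∈ Set.Icc (0 : ℝ) 1) :
    ∑ i, sigma β (a i - b i) ≤
      Fintype.card κ / 2 + β / 4 * ∑ i, a i - (∑ i, b i) * (sigma β 1 - 1 / 2) := by
  calc ∑ i, sigma β (a i - b i)
      ≤ ∑ i, (1 / 2 + β / 4 * a i - b i * (sigma β 1 - 1 / 2)) :=
        sum_le_sum fun i _ => sigma_sub_le hβ (ha i) (hb i)
    _ = _ := by
        simp only [sum_sub_distrib, sum_add_distrib, ← mul_sum, ← sum_mul, sum_const,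
          card_univ, nsmul_eq_mul]
        ring

end Sigmoid

open Sigmoid in
theorem borda_above_average_core_general {ι : Type*} (β : ℝ) (hβ : 0 < β)
    (n : ℕ) (J : Finset ι)
    (w : Fin n → ℝ) (y : ι → Fin n → ℝ)
    (hw : ∀ i, w i ∈ Set.Icc (0:ℝ) 1)
    (hy : ∀ j ∈ J, ∀ i, y j i ∈ Set.Icc (0:ℝ) 1)
    (h : ∑ j ∈ J, ∑ i, sigma β (w i - y j i) ≥ (J.card : ℝ) * n / 2) :
    (J.card : ℝ) * (β / 4) * ∑ i, w i ≥
      ∑ j ∈ J, (∑ i, y j i) * ((1 - Real.exp (-β)) / (2 * (1 + Real.exp (-β)))) := by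
  rw [← sigma_one_sub_half]
  have hsum : ∑ j ∈ J, ∑ i, sigma β (w i - y j i) ≤
      ∑ j ∈ J, ((n : ℝ) / 2 + β / 4 * ∑ i, w i - (∑ i, y j i) * (sigma β 1 - 1 / 2)) :=
    sum_le_sum fun j hj => by
      simpa using sum_sigma_sub_le hβ.le (fun i => (hw i).1) (hy j hj)
  rw [sum_sub_distrib, sum_const, nsmul_eq_mul] at hsum
  linarith

theorem borda_above_average_core {ι : Type*} (β : ℝ) (hβ : 0 < β)
    (n : ℕ) (hn : 1 ≤ n) (J : Finset ι) (hJ : J.Nonempty)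
    (w : Fin n → ℝ) (y : ι → Fin n → ℝ)
    (hw : ∀ i, w i ∈ Set.Icc (0:ℝ) 1)
    (hy : ∀ j ∈ J, ∀ i, y j i ∈ Set.Icc (0:ℝ) 1)
    (h : ∑ j ∈ J, ∑ i, sigma β (w i - y j i) ≥ (J.card : ℝ) * n / 2) :
    (J.card : ℝ) * (β / 4) * ∑ i, w i ≥
      ∑ j ∈ J, (∑ i, y j i) * ((1 - Real.exp (-β)) / (2 * (1 + Real.exp (-β)))) :=
  borda_above_average_core_general β hβ n J w y hw hy h
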